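/- (Suboptimality of pessimistic value iteration, finite-horizon.) Consider a finite-horizon MDP with horizon H, finite state and action spaces, and bounded rewards. Suppose for each step h, Λ_h : S × A → ℝ≥0 satisfies |T̂^π V_{h+1}(s,a) − T^π V_{h+1}(s,a)| ≤ Λ_h(s,a) for all (s,a), where T̂^π is the proxy Bellman operator used in the pessimistic value iteration Q_h(s,a) = T̂^π V_{h+1}(s,a) − Λ_h(s,a), V_h(s) = max_a Q_h(s,a) (with V_{H+1} ≡ 0), and π̂ is the greedy policy with respect to Q_h. Then for every starting state s_1, V_1^{π*}(s_1) − V_1^{π̂}(s_1) ≤ 2·Σ_{h=1}^H E_{ρ^{π*}}[Λ_h(s_h,a_h)], where π* is an optimal policy and ρ^{π*} the trajectory distribution it induces in the true MDP. -/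
import Mathlib


open Finset

variable {S A : Type*}

/-- Finite-horizon value of a (time-dependent, deterministic) policy in the true
MDP: `Vpol T r π j h s` is the value at state `s` and step `h` when `j` decision
steps remain. -/
noncomputable def Vpol [Fintype S] (T : S → A → S → ℝ) (r : S → A → ℝ)
    (π : ℕ → S → A) : ℕ → ℕ → S → ℝ
  | 0, _, _ => 0
  | j + 1, h, s =>
      r s (π h s) + ∑ s', T s (π h s) s' * Vpol T r π j (h + 1) s'

/-- Occupancy measure: `occ T π s₁ h s` is the probability of being in state `s`
at step `h` when starting from `s₁` at step `1` and following policy `π` in the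
true MDP. -/
noncomputable def occ [Fintype S] [DecidableEq S] (T : S → A → S → ℝ)
    (π : ℕ → S → A) (s₁ : S) : ℕ → S → ℝ
  | 0, s => if s = s₁ then 1 else 0
  | 1, s => if s = s₁ then 1 else 0
  | h + 1, s' => ∑ s, occ T π s₁ h s * T s (π h s) s'

lemma occ_succ_succ [Fintype S] [DecidableEq S] (T : S → A → S → ℝ)
    (π : ℕ → S → A) (s₁ : S) (k : ℕ) (s' : S) :
    occ T π s₁ (k + 2) s' = ∑ s, occ T π s₁ (k + 1) s * T s (π (k + 1) s) s' := by
  rw [occ]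
  simp

lemma occ_nonneg [Fintype S] [DecidableEq S] (T : S → A → S → ℝ)
    (π : ℕ → S → A) (s₁ : S) (hT0 : ∀ s a s', 0 ≤ T s a s') :
    ∀ h s, 0 ≤ occ T π s₁ h s := by
  intro h
  induction h with
  | zero => intro s; rw [occ]; positivity
  | succ n ih =>
    intro s
    match n with
    | 0 => rw [occ]; positivity
    | k + 1 =>
      rw [occ_succ_succ]
      exact Finset.sum_nonneg fun s' _ => mul_nonneg (ih s') (hT0 _ _ _)


/-- PEVI suboptimality (finite horizon, deterministic ξ-uncertainty quantifier):
the greedy policy of pessimistic value iteration has suboptimality bounded by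
twice the expected cumulative penalty along the optimal trajectory. -/
theorem pevi_suboptimality [Fintype S] [DecidableEq S] [Fintype A]
    (T : S → A → S → ℝ) (r : S → A → ℝ) (H : ℕ)
    (hT0 : ∀ s a s', 0 ≤ T s a s') (hTsum : ∀ s a, ∑ s', T s a s' = 1)
    (Λ : ℕ → S → A → ℝ) (hΛ0 : ∀ h s a, 0 ≤ Λ h s a)
    -- pessimistic value iteration data
    (That : ℕ → S → A → ℝ)  -- `That h s a` is the proxy Bellman backup T̂^π V_{h+1}(s,a)
    (Q : ℕ → S → A → ℝ) (V : ℕ → S → ℝ)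
    (hVend : ∀ s, V (H + 1) s = 0)
    (hQ : ∀ h ∈ Icc 1 H, ∀ s a, Q h s a = That h s a - Λ h s a)
    -- ξ-uncertainty quantifier condition: |T̂^π V_{h+1} − T^π V_{h+1}| ≤ Λ_h
    (hxi : ∀ h ∈ Icc 1 H, ∀ s a,
      |That h s a - (r s a + ∑ s', T s a s' * V (h + 1) s')| ≤ Λ h s a)
    -- greedy policy π̂ w.r.t. Q, and V h s = max_a Q h s a
    (πhat : ℕ → S → A)
    (hgreedy : ∀ h ∈ Icc 1 H, ∀ s a, Q h s a ≤ Q h s (πhat h s))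
    (hVmax : ∀ h ∈ Icc 1 H, ∀ s, V h s = Q h s (πhat h s))
    -- π* is an optimal policy in the true MDP
    (πstar : ℕ → S → A)
    (hopt : ∀ (π : ℕ → S → A) (h : ℕ) (s : S), h ∈ Icc 1 (H + 1) →
      Vpol T r π (H + 1 - h) h s ≤ Vpol T r πstar (H + 1 - h) h s) :
    ∀ s₁ : S,
      Vpol T r πstar H 1 s₁ - Vpol T r πhat H 1 s₁
        ≤ 2 * ∑ h ∈ Icc 1 H, ∑ s, occ T πstar s₁ h s * Λ h s (πstar h s) := by
  intro s₁
  -- Pessimism: V h ≤ V^{π̂}_h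
  have pess : ∀ j, j ≤ H → ∀ s, V (H + 1 - j) s ≤ Vpol T r πhat j (H + 1 - j) s := by
    intro j
    induction j with
    | zero => intro _ s; simp [Vpol, hVend]
    | succ j ih =>
      intro hj s
      have hj' : j ≤ H := Nat.le_of_succ_le hj
      set h := H + 1 - (j + 1) with hh
      have h1 : h ∈ Icc 1 H := by rw [Finset.mem_Icc]; omega
      have hsucc : h + 1 = H + 1 - j := by omega
      have e3 := abs_le.mp (hxi h h1 s (πhat h s))
      have e5 : ∑ s', T s (πhat h s) s' * V (h + 1) s'
          ≤ ∑ s', T s (πhat h s) s' * Vpol T r πhat j (h + 1) s' := by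
        apply Finset.sum_le_sum
        intro s' _
        have hih := ih hj' s'
        rw [← hsucc] at hih
        exact mul_le_mul_of_nonneg_left hih (hT0 _ _ _)
      have eV : Vpol T r πhat (j + 1) h s
          = r s (πhat h s) + ∑ s', T s (πhat h s) s' * Vpol T r πhat j (h + 1) s' := by
        rw [Vpol]
      rw [hVmax h h1 s, hQ h h1 s, eV]
      linarith [e3.1]
  -- Pointwise recursion for the gap along π*
  have key : ∀ j h, h ∈ Icc 1 H → H + 1 = h + (j + 1) → ∀ s,
      Vpol T r πstar (j + 1) h s - V h s
        ≤ 2 * Λ h s (πstar h s)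
          + ∑ s', T s (πstar h s) s' * (Vpol T r πstar j (h + 1) s' - V (h + 1) s') := by
    intro j h h1 hj s
    have e3 := abs_le.mp (hxi h h1 s (πstar h s))
    have hVge : Q h s (πstar h s) ≤ V h s := by
      rw [hVmax h h1 s]; exact hgreedy h h1 s (πstar h s)
    rw [hQ h h1 s] at hVge
    have eV : Vpol T r πstar (j + 1) h s
        = r s (πstar h s) + ∑ s', T s (πstar h s) s' * Vpol T r πstar j (h + 1) s' := by
      rw [Vpol]
    have esum : ∑ s', T s (πstar h s) s' * (Vpol T r πstar j (h + 1) s' - V (h + 1) s')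
        = (∑ s', T s (πstar h s) s' * Vpol T r πstar j (h + 1) s')
          - ∑ s', T s (πstar h s) s' * V (h + 1) s' := by
      rw [← Finset.sum_sub_distrib]
      exact Finset.sum_congr rfl fun s' _ => by ring
    rw [eV, esum]
    linarith [e3.2]
  -- Occupancy-weighted unrolling
  have main : ∀ j, j ≤ H →
      ∑ s, occ T πstar s₁ (H + 1 - j) s * (Vpol T r πstar j (H + 1 - j) s - V (H + 1 - j) s)
        ≤ 2 * ∑ h ∈ Icc (H + 1 - j) H, ∑ s, occ T πstar s₁ h s * Λ h s (πstar h s) := by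
    intro j
    induction j with
    | zero =>
      intro _
      simp [Vpol, hVend]
    | succ j ih =>
      intro hj
      have hj' : j ≤ H := Nat.le_of_succ_le hj
      set h := H + 1 - (j + 1) with hh
      have h1 : h ∈ Icc 1 H := by rw [Finset.mem_Icc]; omega
      have hle : 1 ≤ h := (Finset.mem_Icc.mp h1).1
      have hsucc : h + 1 = H + 1 - j := by omega
      have hjj : H + 1 = h + (j + 1) := by omega
      -- step 1: pointwise bound inside the sum
      have step1 : ∑ s, occ T πstar s₁ h s * (Vpol T r πstar (j + 1) h s - V h s)
          ≤ ∑ s, occ T πstar s₁ h s *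
              (2 * Λ h s (πstar h s)
                + ∑ s', T s (πstar h s) s' * (Vpol T r πstar j (h + 1) s' - V (h + 1) s')) := by
        apply Finset.sum_le_sum
        intro s _
        exact mul_le_mul_of_nonneg_left (key j h h1 hjj s) (occ_nonneg T πstar s₁ hT0 h s)
      -- step 2: rewrite the RHS of step1
      have step2 : ∑ s, occ T πstar s₁ h s *
              (2 * Λ h s (πstar h s)
                + ∑ s', T s (πstar h s) s' * (Vpol T r πstar j (h + 1) s' - V (h + 1) s'))
          = 2 * (∑ s, occ T πstar s₁ h s * Λ h s (πstar h s))
            + ∑ s', occ T πstar s₁ (h + 1) s'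
                * (Vpol T r πstar j (h + 1) s' - V (h + 1) s') := by
        simp only [mul_add, Finset.mul_sum]
        rw [Finset.sum_add_distrib]
        congr 1
        · exact Finset.sum_congr rfl fun s _ => by ring
        · rw [Finset.sum_comm]
          apply Finset.sum_congr rfl
          intro s' _
          obtain ⟨k, hk⟩ : ∃ k, h = k + 1 := ⟨h - 1, by omega⟩
          rw [hk, occ_succ_succ, Finset.sum_mul]
          exact Finset.sum_congr rfl fun s _ => by ring
      -- split the Icc sum
      have hsplit : ∑ h' ∈ Icc h H, ∑ s, occ T πstar s₁ h' s * Λ h' s (πstar h' s)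
          = (∑ s, occ T πstar s₁ h s * Λ h s (πstar h s))
            + ∑ h' ∈ Icc (h + 1) H, ∑ s, occ T πstar s₁ h' s * Λ h' s (πstar h' s) := by
        have hins : Icc h H = insert h (Icc (h + 1) H) := by
          ext x
          simp only [Finset.mem_Icc, Finset.mem_insert]
          omega
        rw [hins, Finset.sum_insert (by simp only [Finset.mem_Icc]; omega)]
      have hih := ih hj'
      rw [← hsucc] at hih
      calc ∑ s, occ T πstar s₁ h s * (Vpol T r πstar (j + 1) h s - V h s)
          ≤ 2 * (∑ s, occ T πstar s₁ h s * Λ h s (πstar h s))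
            + ∑ s', occ T πstar s₁ (h + 1) s'
                * (Vpol T r πstar j (h + 1) s' - V (h + 1) s') := by
            rw [← step2]; exact step1
        _ ≤ 2 * ∑ h' ∈ Icc h H, ∑ s, occ T πstar s₁ h' s * Λ h' s (πstar h' s) := by
            rw [hsplit]; linarith
  -- assemble
  have h1H : H + 1 - H = 1 := by omega
  have hm := main H le_rfl
  rw [h1H] at hm
  have hp := pess H le_rfl s₁
  rw [h1H] at hp
  have hocc1 : ∀ g : S → ℝ, ∑ s, occ T πstar s₁ 1 s * g s = g s₁ := by
    intro g
    have : ∀ s, occ T πstar s₁ 1 s = if s = s₁ then 1 else 0 := by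
      intro s; rw [occ]
    simp only [this, ite_mul, one_mul, zero_mul]
    rw [Finset.sum_ite_eq' Finset.univ s₁ g]
    simp
  rw [hocc1] at hm
  linarith
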